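/- arXiv:2309.16687 — 2 statements merged into one kernel-verified Lean document; each statement's English description precedes it below -/
import Mathlib

section
/- General representer theorem (finite-dimensional): let ℓ : ℝ × ℝ → ℝ be arbitrary in its first argument and g : ℝ≥0 → ℝ strictly monotone increasing. Any minimizer ŵ ∈ ℝⁿ of w ↦ Σₜ ℓ(yₜ, ⟪w, xₜ⟫) + g(‖w‖) lies in span{x₁, …, x_T}. -/
open scoped RealInnerProductSpace

/-! Projecting a minimizer `ŵ` orthogonally onto `K = span{x₁, …, x_T}` leaves every `⟪ŵ, xₜ⟫`,
hence the loss term, unchanged, while it strictly decreases the norm unless `ŵ ∈ K`; since `g`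
is strictly increasing, a minimizer outside `K` would be beaten by its projection. -/

namespace Submodule

variable {E : Type*} [NormedAddCommGroup E] [InnerProductSpace ℝ E]
  (K : Submodule ℝ E) [K.HasOrthogonalProjection]

theorem inner_starProjection_left_of_mem {w : E} (hw : w ∈ K) (v : E) :
    ⟪K.starProjection v, w⟫ = ⟪v, w⟫ := by
  rw [inner_starProjection_left_eq_right, starProjection_eq_self_iff.mpr hw]

theorem norm_starProjection_lt_of_notMem {v : E} (hv : v ∉ K) :
    ‖K.starProjection v‖ < ‖v‖ :=
  (K.norm_starProjection_apply_le v).lt_of_ne (mt (K.mem_iff_norm_starProjection v).mpr hv)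

theorem mem_of_forall_add_comp_norm_le {L : E → ℝ} {g : ℝ → ℝ}
    (hg : StrictMonoOn g (Set.Ici 0)) {v : E} (hL : L (K.starProjection v) = L v)
    (hmin : ∀ w, L v + g ‖v‖ ≤ L w + g ‖w‖) : v ∈ K := by
  by_contra hv
  have hnorm := hg (norm_nonneg _) (norm_nonneg v) (K.norm_starProjection_lt_of_notMem hv)
  have := hmin (K.starProjection v)
  rw [hL] at this
  linarith

end Submodule

/-- General (finite-dimensional) representer theorem: for an arbitrary loss
`ℓ : ℝ × ℝ → ℝ` and a strictly monotone increasing regularizer `g` of the norm,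
any minimizer of `w ↦ Σₜ ℓ(yₜ, ⟪w, xₜ⟫) + g(‖w‖)` lies in `span{x₁, …, x_T}`. -/
theorem general_representer (n T : ℕ) (x : Fin T → EuclideanSpace ℝ (Fin n))
    (y : Fin T → ℝ) (ℓ : ℝ → ℝ → ℝ) (g : ℝ → ℝ)
    (hg : ∀ a b : ℝ, 0 ≤ a → a < b → g a < g b)
    (what : EuclideanSpace ℝ (Fin n))
    (hmin : ∀ w : EuclideanSpace ℝ (Fin n),
      (∑ t, ℓ (y t) ⟪what, x t⟫) + g ‖what‖ ≤ (∑ t, ℓ (y t) ⟪w, x t⟫) + g ‖w‖) :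
    what ∈ Submodule.span ℝ (Set.range x) := by
  set K := Submodule.span ℝ (Set.range x)
  refine K.mem_of_forall_add_comp_norm_le (L := fun w ↦ ∑ t, ℓ (y t) ⟪w, x t⟫)
    (fun a ha b _ hab ↦ hg a b ha hab) ?_ hmin
  simp only [K.inner_starProjection_left_of_mem (Submodule.subset_span (Set.mem_range_self _))]
end

section
/- Equivalence of CMDS/similarity matching with its min-max primal-dual form: for all Z ∈ ℝ^{m×T} and X ∈ ℝ^{n×T}, -2 Tr(XᵀX ZᵀZ) + ‖ZᵀZ‖_F² = max over M ∈ ℝ^{m×m} min over W ∈ ℝ^{m×n} of [ -2Tr(ZᵀWX) + Tr(ZᵀMZ) + Tr(WᵀW) - (1/2)Tr(MᵀM) ], with the optimum at W = ZXᵀ and M = ZZᵀ. -/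
open Matrix

lemma tr_sq_nonneg {a b : ℕ} (A : Matrix (Fin a) (Fin b) ℝ) :
    0 ≤ (Aᵀ * A).trace := by
  rw [Matrix.trace]
  apply Finset.sum_nonneg
  intro j _
  simp only [Matrix.diag_apply, Matrix.mul_apply, Matrix.transpose_apply]
  exact Finset.sum_nonneg fun i _ => mul_self_nonneg _

lemma tr_expand {a b : ℕ} (A B : Matrix (Fin a) (Fin b) ℝ) :
    ((B - A)ᵀ * (B - A)).trace
      = (Bᵀ * B).trace - 2 * (Aᵀ * B).trace + (Aᵀ * A).trace := by
  have h : (Bᵀ * A).trace = (Aᵀ * B).trace := by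
    rw [← Matrix.trace_transpose (Bᵀ * A), Matrix.transpose_mul, Matrix.transpose_transpose]
  simp only [Matrix.transpose_sub, Matrix.sub_mul, Matrix.mul_sub, Matrix.trace_sub]
  rw [h]; ring

/-- Equivalence of the CMDS / similarity-matching objective with its min-max
primal-dual form: with
`f(M, W) = -2Tr(ZᵀWX) + Tr(ZᵀMZ) + Tr(WᵀW) - (1/2)Tr(MᵀM)`,
for every `M` the inner minimum over `W` is attained at `W = ZXᵀ`, the outer
maximum over `M` is attained at `M = ZZᵀ`, and the saddle value equals
`-Tr(XᵀX ZᵀZ) + (1/2)‖ZᵀZ‖_F²`. -/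
theorem similarity_matching_minmax (n m T : ℕ)
    (X : Matrix (Fin n) (Fin T) ℝ) (Z : Matrix (Fin m) (Fin T) ℝ) :
    (∀ M : Matrix (Fin m) (Fin m) ℝ, ∀ W : Matrix (Fin m) (Fin n) ℝ,
      -2 * (Zᵀ * (Z * Xᵀ) * X).trace + (Zᵀ * M * Z).trace
          + ((Z * Xᵀ)ᵀ * (Z * Xᵀ)).trace - (1 / 2) * (Mᵀ * M).trace ≤
      -2 * (Zᵀ * W * X).trace + (Zᵀ * M * Z).trace
          + (Wᵀ * W).trace - (1 / 2) * (Mᵀ * M).trace) ∧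
    (∀ M : Matrix (Fin m) (Fin m) ℝ,
      -2 * (Zᵀ * (Z * Xᵀ) * X).trace + (Zᵀ * M * Z).trace
          + ((Z * Xᵀ)ᵀ * (Z * Xᵀ)).trace - (1 / 2) * (Mᵀ * M).trace ≤
      -2 * (Zᵀ * (Z * Xᵀ) * X).trace + (Zᵀ * (Z * Zᵀ) * Z).trace
          + ((Z * Xᵀ)ᵀ * (Z * Xᵀ)).trace - (1 / 2) * ((Z * Zᵀ)ᵀ * (Z * Zᵀ)).trace) ∧
    -2 * (Zᵀ * (Z * Xᵀ) * X).trace + (Zᵀ * (Z * Zᵀ) * Z).trace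
        + ((Z * Xᵀ)ᵀ * (Z * Xᵀ)).trace - (1 / 2) * ((Z * Zᵀ)ᵀ * (Z * Zᵀ)).trace =
      -(Xᵀ * X * (Zᵀ * Z)).trace + (1 / 2) * ((Zᵀ * Z)ᵀ * (Zᵀ * Z)).trace := by
  have h1 : ∀ W : Matrix (Fin m) (Fin n) ℝ,
      (Zᵀ * W * X).trace = ((Z * Xᵀ)ᵀ * W).trace := by
    intro W
    rw [Matrix.transpose_mul, Matrix.transpose_transpose, Matrix.trace_mul_cycle]
  have h2 : ∀ M : Matrix (Fin m) (Fin m) ℝ,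
      (Zᵀ * M * Z).trace = ((Z * Zᵀ)ᵀ * M).trace := by
    intro M
    rw [Matrix.transpose_mul, Matrix.transpose_transpose, Matrix.trace_mul_cycle]
  have e1 : ((Z * Xᵀ)ᵀ * (Z * Xᵀ)).trace = (Xᵀ * X * (Zᵀ * Z)).trace := by
    simp only [Matrix.transpose_mul, Matrix.transpose_transpose, ← Matrix.mul_assoc]
    rw [Matrix.trace_mul_cycle (X * Zᵀ) Z Xᵀ]
    simp only [← Matrix.mul_assoc]
  have e2 : ((Z * Zᵀ)ᵀ * (Z * Zᵀ)).trace = ((Zᵀ * Z)ᵀ * (Zᵀ * Z)).trace := by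
    simp only [Matrix.transpose_mul, Matrix.transpose_transpose, ← Matrix.mul_assoc]
    rw [Matrix.trace_mul_cycle (Z * Zᵀ) Z Zᵀ]
    simp only [← Matrix.mul_assoc]
  refine ⟨?_, ?_, ?_⟩
  · intro M W
    have hnn := tr_sq_nonneg (W - Z * Xᵀ)
    rw [tr_expand (Z * Xᵀ) W] at hnn
    rw [h1 W, h1 (Z * Xᵀ)]
    linarith
  · intro M
    have hnn := tr_sq_nonneg (M - Z * Zᵀ)
    rw [tr_expand (Z * Zᵀ) M] at hnn
    rw [h2 M, h2 (Z * Zᵀ)]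
    linarith
  · have e3 : (Zᵀ * (Z * Xᵀ) * X).trace = (Xᵀ * X * (Zᵀ * Z)).trace := by
      simp only [← Matrix.mul_assoc]
      rw [Matrix.trace_mul_cycle (Zᵀ * Z) Xᵀ X, Matrix.trace_mul_cycle X (Zᵀ * Z) Xᵀ]
      simp only [← Matrix.mul_assoc]
    have e4 : (Zᵀ * (Z * Zᵀ) * Z).trace = ((Zᵀ * Z)ᵀ * (Zᵀ * Z)).trace := by
      simp only [Matrix.transpose_mul, Matrix.transpose_transpose, ← Matrix.mul_assoc]
    rw [e1, e2, e3, e4]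
    ring
end
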